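/- Let λ > 0, c ∈ ℂ, and let ω, f : ℝ → ℂ be continuous functions vanishing outside [−1, 1]. Suppose u : ℝ → ℂ is continuous and satisfies the integral equation u(x) = (1/(2iλ)) ∫_{−1}^{1} e^{iλ|x−s|} ( f(s) − c ω(s) u(s) ) ds for all x ∈ ℝ. Then u is twice continuously differentiable, u''(x) + (λ² + c ω(x)) u(x) = f(x) for all x ∈ ℝ, and u satisfies the outgoing conditions u'(x) − iλ u(x) = 0 for all x ≥ 1 and u'(x) + iλ u(x) = 0 for all x ≤ −1. -/

import Mathlib

open MeasureTheory Filter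

/-!
Put `m = iλ` and `g = f - c ω u`, which is continuous and vanishes off `(-1, 1)`. The integral
equation says `u = (2m)⁻¹ ∫ e^{m|x-s|} g(s) ds`. Splitting the integral at `x` (variation of
constants) gives `u(x) = (2m)⁻¹ (e^{mx} L(x) + e^{-mx} R(x))` with `L(x) = ∫_{-1}^x e^{-ms} g` and
`R(x) = ∫_x^1 e^{ms} g`, so `u' = (e^{mx} L - e^{-mx} R) / 2` and `u'' = m² u + g = -λ² u + g`.
For `x ≥ 1` the integral `R(x)` vanishes and `u' = m u`; for `x ≤ -1` it is `L(x)`, and `u' = -m u`.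
-/

open Complex Set intervalIntegral

theorem Continuous.eq_zero_of_notMem_Ioo {E : Type*} [TopologicalSpace E] [Zero E] [T1Space E]
    {g : ℝ → E} {a b : ℝ} (hg : Continuous g) (hsupp : ∀ s, s ∉ Icc a b → g s = 0) (s : ℝ)
    (hs : s ∉ Ioo a b) : g s = 0 := by
  have hclosed : IsClosed (g ⁻¹' {0}) := isClosed_singleton.preimage hg
  rcases le_or_gt s a with hsa | has
  · refine closure_minimal (fun t (ht : t < a) => hsupp t fun h => ?_) hclosed
      (closure_Iio a ▸ hsa : s ∈ closure (Iio a))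
    exact (not_le.2 ht) h.1
  · refine closure_minimal (fun t (ht : b < t) => hsupp t fun h => ?_) hclosed
      (closure_Ioi b ▸ (not_lt.1 fun hsb => hs ⟨has, hsb⟩) : s ∈ closure (Ioi b))
    exact (not_le.2 ht) h.2

theorem hasDerivAt_cexp_mul_ofReal (m : ℂ) (x : ℝ) :
    HasDerivAt (fun y : ℝ => cexp (m * y)) (m * cexp (m * x)) x := by
  simpa [mul_comm] using ((hasDerivAt_id x).ofReal_comp.const_mul m).cexp

theorem cexp_mul_abs_sub_of_le (m : ℂ) {x s : ℝ} (h : s ≤ x) :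
    cexp (m * ((|x - s| : ℝ) : ℂ)) = cexp (m * x) * cexp (-m * s) := by
  rw [abs_of_nonneg (sub_nonneg.2 h), ← Complex.exp_add]
  push_cast
  ring_nf

theorem cexp_mul_abs_sub_of_ge (m : ℂ) {x s : ℝ} (h : x ≤ s) :
    cexp (m * ((|x - s| : ℝ) : ℂ)) = cexp (-m * x) * cexp (m * s) := by
  rw [abs_of_nonpos (sub_nonpos.2 h), ← Complex.exp_add]
  push_cast
  ring_nf

theorem cexp_mul_mul_cexp_neg_mul (m : ℂ) (x : ℝ) : cexp (m * x) * cexp (-m * x) = 1 := by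
  rw [← Complex.exp_add, neg_mul, add_neg_cancel, Complex.exp_zero]

theorem contDiff_two_of_hasDerivAt {𝕜 F : Type*} [NontriviallyNormedField 𝕜]
    [NormedAddCommGroup F] [NormedSpace 𝕜 F] {u u' u'' : 𝕜 → F} (h1 : ∀ x, HasDerivAt u (u' x) x)
    (h2 : ∀ x, HasDerivAt u' (u'' x) x) (h3 : Continuous u'') : ContDiff 𝕜 2 u := by
  have hu' : deriv u = u' := funext fun x => (h1 x).deriv
  have hu'' : deriv u' = u'' := funext fun x => (h2 x).deriv
  rw [show (2 : WithTop ℕ∞) = 1 + 1 from rfl, contDiff_succ_iff_deriv, hu']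
  exact ⟨fun x => (h1 x).differentiableAt, by simp,
    contDiff_one_iff_deriv.2 ⟨fun x => (h2 x).differentiableAt, hu'' ▸ h3⟩⟩

namespace GreenPotential

variable (m : ℂ) (g : ℝ → ℂ) (a b : ℝ)

noncomputable def leftIntegral (x : ℝ) : ℂ := ∫ s in a..x, cexp (-m * s) * g s

noncomputable def rightIntegral (x : ℝ) : ℂ := ∫ s in x..b, cexp (m * s) * g s

/-- For `m = iλ`, this is `g` integrated against the outgoing Green's function of `u'' + λ² u`. -/
noncomputable def potential (x : ℝ) : ℂ :=
  (2 * m)⁻¹ * ∫ s in a..b, cexp (m * ((|x - s| : ℝ) : ℂ)) * g s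

noncomputable def potentialDeriv (x : ℝ) : ℂ :=
  2⁻¹ * (cexp (m * x) * leftIntegral m g a x - cexp (-m * x) * rightIntegral m g b x)

variable {m g a b}

theorem hasDerivAt_leftIntegral (hg : Continuous g) (x : ℝ) :
    HasDerivAt (leftIntegral m g a) (cexp (-m * x) * g x) x := by
  have hc : Continuous fun s : ℝ => cexp (-m * s) * g s := by fun_prop
  exact integral_hasDerivAt_right (hc.intervalIntegrable _ _) (hc.stronglyMeasurableAtFilter _ _)
    hc.continuousAt

theorem hasDerivAt_rightIntegral (hg : Continuous g) (x : ℝ) :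
    HasDerivAt (rightIntegral m g b) (-(cexp (m * x) * g x)) x := by
  have hc : Continuous fun s : ℝ => cexp (m * s) * g s := by fun_prop
  exact integral_hasDerivAt_left (hc.intervalIntegrable _ _) (hc.stronglyMeasurableAtFilter _ _)
    hc.continuousAt

theorem leftIntegral_eq_zero (hsupp : ∀ s, s ∉ Ioo a b → g s = 0) {x : ℝ} (hx : x ≤ a) :
    leftIntegral m g a x = 0 := by
  rw [leftIntegral, integral_congr (g := fun _ => 0), intervalIntegral.integral_zero]
  intro s hs
  rw [uIcc_of_ge hx] at hs
  simp [hsupp s fun h => (not_le.2 h.1) hs.2]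

theorem rightIntegral_eq_zero (hsupp : ∀ s, s ∉ Ioo a b → g s = 0) {x : ℝ} (hx : b ≤ x) :
    rightIntegral m g b x = 0 := by
  rw [rightIntegral, integral_congr (g := fun _ => 0), intervalIntegral.integral_zero]
  intro s hs
  rw [uIcc_of_ge hx] at hs
  simp [hsupp s fun h => (not_le.2 h.2) hs.1]

/-- Splitting at `x` is valid even for `x ∉ [a, b]`, because there the extra piece of the
integral only sees points outside the support of `g`. -/
theorem integral_cexp_mul_abs_sub (hg : Continuous g) (hsupp : ∀ s, s ∉ Ioo a b → g s = 0)
    (x : ℝ) : ∫ s in a..b, cexp (m * ((|x - s| : ℝ) : ℂ)) * g s =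
      cexp (m * x) * leftIntegral m g a x + cexp (-m * x) * rightIntegral m g b x := by
  have hc : Continuous fun s : ℝ => cexp (m * ((|x - s| : ℝ) : ℂ)) * g s := by fun_prop
  rw [← integral_add_adjacent_intervals (hc.intervalIntegrable a x) (hc.intervalIntegrable x b),
    leftIntegral, rightIntegral, ← intervalIntegral.integral_const_mul,
    ← intervalIntegral.integral_const_mul]
  congr 1
  · refine integral_congr fun s hs => ?_
    rcases le_or_gt s x with hsx | hxs
    · rw [cexp_mul_abs_sub_of_le m hsx, mul_assoc]
    · have hsa : s ≤ a := (le_sup_iff.1 hs.2).resolve_right (not_le.2 hxs)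
      simp [hsupp s fun h => (not_le.2 h.1) hsa]
  · refine integral_congr fun s hs => ?_
    rcases le_or_gt x s with hxs | hsx
    · rw [cexp_mul_abs_sub_of_ge m hxs, mul_assoc]
    · have hbs : b ≤ s := (inf_le_iff.1 hs.1).resolve_left (not_le.2 hsx)
      simp [hsupp s fun h => (not_le.2 h.2) hbs]

theorem potential_eq (hg : Continuous g) (hsupp : ∀ s, s ∉ Ioo a b → g s = 0) (x : ℝ) :
    potential m g a b x = (2 * m)⁻¹ *
      (cexp (m * x) * leftIntegral m g a x + cexp (-m * x) * rightIntegral m g b x) := by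
  rw [potential, integral_cexp_mul_abs_sub hg hsupp]

theorem hasDerivAt_potential (hm : m ≠ 0) (hg : Continuous g) (hsupp : ∀ s, s ∉ Ioo a b → g s = 0)
    (x : ℝ) : HasDerivAt (potential m g a b) (potentialDeriv m g a b x) x := by
  rw [funext (potential_eq hg hsupp)]
  refine ((((hasDerivAt_cexp_mul_ofReal m x).mul (hasDerivAt_leftIntegral hg x)).add
    ((hasDerivAt_cexp_mul_ofReal (-m) x).mul (hasDerivAt_rightIntegral hg x))).const_mul
      _).congr_deriv ?_
  rw [potentialDeriv]
  field_simp
  ring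

theorem hasDerivAt_potentialDeriv (hm : m ≠ 0) (hg : Continuous g)
    (hsupp : ∀ s, s ∉ Ioo a b → g s = 0) (x : ℝ) :
    HasDerivAt (potentialDeriv m g a b) (m ^ 2 * potential m g a b x + g x) x := by
  refine ((((hasDerivAt_cexp_mul_ofReal m x).mul (hasDerivAt_leftIntegral hg x)).sub
    ((hasDerivAt_cexp_mul_ofReal (-m) x).mul (hasDerivAt_rightIntegral hg x))).const_mul
      _).congr_deriv ?_
  rw [potential_eq hg hsupp]
  set L := leftIntegral m g a x
  set R := rightIntegral m g b x
  linear_combination -(m / 2 * (cexp (m * x) * L + cexp (-m * x) * R)) * mul_inv_cancel₀ hm +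
    g x * cexp_mul_mul_cexp_neg_mul m x

theorem potentialDeriv_eq_of_le (hm : m ≠ 0) (hg : Continuous g)
    (hsupp : ∀ s, s ∉ Ioo a b → g s = 0) {x : ℝ} (hx : b ≤ x) :
    potentialDeriv m g a b x = m * potential m g a b x := by
  rw [potentialDeriv, potential_eq hg hsupp, rightIntegral_eq_zero hsupp hx]
  field_simp
  ring

theorem potentialDeriv_eq_of_ge (hm : m ≠ 0) (hg : Continuous g)
    (hsupp : ∀ s, s ∉ Ioo a b → g s = 0) {x : ℝ} (hx : x ≤ a) :
    potentialDeriv m g a b x = -m * potential m g a b x := by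
  rw [potentialDeriv, potential_eq hg hsupp, leftIntegral_eq_zero hsupp hx]
  field_simp
  ring

theorem contDiff_potential (hm : m ≠ 0) (hg : Continuous g) (hsupp : ∀ s, s ∉ Ioo a b → g s = 0) :
    ContDiff ℝ 2 (potential m g a b) := by
  have h1 := hasDerivAt_potential hm hg hsupp
  have h2 := hasDerivAt_potentialDeriv hm hg hsupp
  have hcont : Continuous (potential m g a b) :=
    continuous_iff_continuousAt.2 fun x => (h1 x).continuousAt
  exact contDiff_two_of_hasDerivAt h1 h2 ((continuous_const.mul hcont).add hg)

end GreenPotential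

open GreenPotential

theorem stmt15 (lam : ℝ) (hlam : 0 < lam) (c : ℂ)
    (ω f : ℝ → ℂ) (hω : Continuous ω) (hf : Continuous f)
    (hωsupp : ∀ x : ℝ, x ∉ Set.Icc (-1 : ℝ) 1 → ω x = 0)
    (hfsupp : ∀ x : ℝ, x ∉ Set.Icc (-1 : ℝ) 1 → f x = 0)
    (u : ℝ → ℂ) (hu : Continuous u)
    (hinteq : ∀ x : ℝ, u x = (1 / (2 * Complex.I * (lam : ℂ))) *
        ∫ s in (-1 : ℝ)..1,
          Complex.exp (Complex.I * (lam : ℂ) * ((|x - s| : ℝ) : ℂ)) * (f s - c * ω s * u s)) :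
    ContDiff ℝ 2 u ∧
    (∀ x : ℝ, deriv (deriv u) x + ((lam : ℂ) ^ 2 + c * ω x) * u x = f x) ∧
    (∀ x : ℝ, 1 ≤ x → deriv u x - Complex.I * (lam : ℂ) * u x = 0) ∧
    (∀ x : ℝ, x ≤ -1 → deriv u x + Complex.I * (lam : ℂ) * u x = 0) := by
  set m : ℂ := Complex.I * lam
  have hm : m ≠ 0 := mul_ne_zero I_ne_zero (ofReal_ne_zero.2 hlam.ne')
  set g : ℝ → ℂ := fun s => f s - c * ω s * u s
  have hg : Continuous g := by fun_prop
  have hsupp : ∀ s, s ∉ Ioo (-1 : ℝ) 1 → g s = 0 :=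
    hg.eq_zero_of_notMem_Ioo fun s hs => by simp [g, hfsupp s hs, hωsupp s hs]
  have hu_eq : u = potential m g (-1) 1 := funext fun x => by
    rw [hinteq x, potential, one_div, mul_assoc]
  have hu' : deriv u = potentialDeriv m g (-1) 1 := by
    rw [hu_eq]
    exact funext fun x => (hasDerivAt_potential hm hg hsupp x).deriv
  have hu'' (x : ℝ) : deriv (deriv u) x = -(lam : ℂ) ^ 2 * u x + g x := by
    rw [hu', (hasDerivAt_potentialDeriv hm hg hsupp x).deriv, ← hu_eq, mul_pow, I_sq, neg_one_mul]
  refine ⟨hu_eq ▸ contDiff_potential hm hg hsupp, fun x => ?_, fun x hx => ?_, fun x hx => ?_⟩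
  · rw [hu'']
    ring
  · rw [hu', potentialDeriv_eq_of_le hm hg hsupp hx, ← hu_eq, sub_self]
  · rw [hu', potentialDeriv_eq_of_ge hm hg hsupp hx, ← hu_eq, neg_mul, neg_add_cancel]
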